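/- arXiv:1911.07029 — 2 statements merged into one kernel-verified Lean document; each statement's English description precedes it below -/
import Mathlib

section
/- Let f : [0,∞) → [0,∞) be a probability density (∫₀^∞ f(t) dt = 1) with cumulative distribution function F(x) = ∫₀^x f(t) dt, and let a > 0. Assume t ↦ t²·f(t) is integrable on [0,∞). Then ∫₀^∞ x²·exp(−a·x)·F(x) dx = ( a·∫₀^∞ t²·exp(−a·t)·f(t) dt + 2·∫₀^∞ t·exp(−a·t)·f(t) dt ) / a² + ( 2·∫₀^∞ exp(−a·t)·f(t) dt ) / a³. -/
/-!
Swapping the order of integration (the kernel `1_{t < x} x² e^{-ax} f(t)` is dominated by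
`|x² e^{-ax}| |f(t)|`, integrable on the product) turns the left side into
`∫ f(t) ∫_t^∞ x² e^{-ax} dx dt`, and an explicit primitive gives
`∫_t^∞ x² e^{-ax} dx = e^{-at} (t²/a + 2t/a² + 2/a³)`. Since `t^k e^{-at} ≤ k!/a^k` on `[0, ∞)`,
integrability of `f` alone makes every term on the right finite.
-/

open MeasureTheory Real Set Filter

section Fubini

variable {f g : ℝ → ℝ} {c : ℝ}

theorem integral_Ioi_mul_intervalIntegral_swap (hg : IntegrableOn g (Ioi c))
    (hf : IntegrableOn f (Ioi c)) :
    ∫ x in Ioi c, g x * ∫ t in c..x, f t = ∫ t in Ioi c, (∫ x in Ioi t, g x) * f t := by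
  set K : ℝ → ℝ → ℝ := fun x t => (Iio x).indicator (fun t => g x * f t) t
  have hK : Integrable (Function.uncurry K)
      ((volume.restrict (Ioi c)).prod (volume.restrict (Ioi c))) := by
    have : Function.uncurry K = {p : ℝ × ℝ | p.2 < p.1}.indicator (fun p => g p.1 * f p.2) := by
      ext ⟨x, t⟩
      simp [K, indicator_apply]
    rw [this]
    exact (hg.mul_prod hf).indicator (measurableSet_lt measurable_snd measurable_fst)
  have h_inner_t : ∀ x ∈ Ioi c, ∫ t in Ioi c, K x t = g x * ∫ t in c..x, f t := by
    intro x hx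
    rw [setIntegral_indicator measurableSet_Iio, Ioi_inter_Iio, integral_const_mul,
      intervalIntegral.integral_of_le (le_of_lt hx), integral_Ioc_eq_integral_Ioo]
  have h_inner_x : ∀ t ∈ Ioi c, ∫ x in Ioi c, K x t = (∫ x in Ioi t, g x) * f t := by
    intro t ht
    have : (fun x => K x t) = (Ioi t).indicator (fun x => g x * f t) := by
      ext x
      simp [K, indicator_apply]
    rw [this, setIntegral_indicator measurableSet_Ioi, Ioi_inter_Ioi, max_eq_right (le_of_lt ht),
      integral_mul_const]
  calc ∫ x in Ioi c, g x * ∫ t in c..x, f t = ∫ x in Ioi c, ∫ t in Ioi c, K x t :=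
        setIntegral_congr_fun measurableSet_Ioi fun x hx => (h_inner_t x hx).symm
    _ = ∫ t in Ioi c, ∫ x in Ioi c, K x t := integral_integral_swap hK
    _ = ∫ t in Ioi c, (∫ x in Ioi t, g x) * f t := setIntegral_congr_fun measurableSet_Ioi h_inner_x

end Fubini

section ExpMoments

variable {a : ℝ}

theorem hasDerivAt_sq_mul_exp_neg_mul_primitive (ha : a ≠ 0) (x : ℝ) :
    HasDerivAt (fun x => -(exp (-a * x) * (x ^ 2 / a + 2 * x / a ^ 2 + 2 / a ^ 3)))
      (x ^ 2 * exp (-a * x)) x := by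
  have h_exp : HasDerivAt (fun x => exp (-a * x)) (exp (-a * x) * (-a)) x := by
    simpa using ((hasDerivAt_id x).const_mul (-a)).exp
  have h_poly : HasDerivAt (fun x => x ^ 2 / a + 2 * x / a ^ 2 + 2 / a ^ 3)
      (2 * x / a + 2 / a ^ 2) x :=
    ((((hasDerivAt_pow 2 x).div_const a).add
      (((hasDerivAt_id x).const_mul 2).div_const (a ^ 2))).add_const (2 / a ^ 3)).congr_deriv
      (by norm_num)
  exact (h_exp.mul h_poly).neg.congr_deriv (by field_simp; ring)

theorem tendsto_sq_mul_exp_neg_mul_primitive (ha : 0 < a) :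
    Tendsto (fun x => -(exp (-a * x) * (x ^ 2 / a + 2 * x / a ^ 2 + 2 / a ^ 3))) atTop (nhds 0) := by
  have h_mom (k : ℕ) : Tendsto (fun x : ℝ => x ^ k * exp (-a * x)) atTop (nhds 0) := by
    simpa using tendsto_rpow_mul_exp_neg_mul_atTop_nhds_zero k a ha
  convert ((((h_mom 2).div_const a).add (((h_mom 1).const_mul 2).div_const (a ^ 2))).add
    (((h_mom 0).const_mul 2).div_const (a ^ 3))).neg using 2
  · ring
  · simp

theorem integrableOn_Ioi_sq_mul_exp_neg_mul (ha : 0 < a) (t : ℝ) :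
    IntegrableOn (fun x => x ^ 2 * exp (-a * x)) (Ioi t) :=
  integrableOn_Ioi_deriv_of_nonneg' (fun x _ => hasDerivAt_sq_mul_exp_neg_mul_primitive ha.ne' x)
    (fun x _ => by positivity) (tendsto_sq_mul_exp_neg_mul_primitive ha)

theorem integral_Ioi_sq_mul_exp_neg_mul (ha : 0 < a) (t : ℝ) :
    ∫ x in Ioi t, x ^ 2 * exp (-a * x) = exp (-a * t) * (t ^ 2 / a + 2 * t / a ^ 2 + 2 / a ^ 3) := by
  rw [integral_Ioi_of_hasDerivAt_of_nonneg'
    (fun x _ => hasDerivAt_sq_mul_exp_neg_mul_primitive ha.ne' x)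
    (fun x _ => by positivity) (tendsto_sq_mul_exp_neg_mul_primitive ha)]
  ring

theorem pow_mul_exp_neg_mul_le (ha : 0 < a) {t : ℝ} (ht : 0 ≤ t) (k : ℕ) :
    t ^ k * exp (-a * t) ≤ k.factorial / a ^ k := by
  have h := pow_div_factorial_le_exp (a * t) (by positivity) k
  rw [div_le_iff₀ (by positivity)] at h
  rw [le_div_iff₀ (by positivity)]
  calc t ^ k * exp (-a * t) * a ^ k = (a * t) ^ k * exp (-a * t) := by ring
    _ ≤ exp (a * t) * k.factorial * exp (-a * t) := by gcongr
    _ = k.factorial := by rw [mul_comm, ← mul_assoc, ← exp_add]; simp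

theorem MeasureTheory.IntegrableOn.pow_mul_exp_neg_mul_mul {f : ℝ → ℝ} (ha : 0 < a)
    (hf : IntegrableOn f (Ioi 0)) (k : ℕ) :
    IntegrableOn (fun t => t ^ k * exp (-a * t) * f t) (Ioi 0) :=
  hf.bdd_mul (by fun_prop) <| ae_restrict_of_forall_mem measurableSet_Ioi fun t (ht : 0 < t) => by
    rw [norm_of_nonneg (by positivity)]
    exact pow_mul_exp_neg_mul_le ha ht.le k

end ExpMoments

theorem laplace_transform_x_sq_cdf_general
    (f : ℝ → ℝ) (a : ℝ) (ha : 0 < a)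
    (hf_prob : (∫ t in Set.Ioi (0 : ℝ), f t) = 1)
    (F : ℝ → ℝ) (hF : ∀ x, F x = ∫ t in (0 : ℝ)..x, f t) :
    (∫ x in Set.Ioi (0 : ℝ), x ^ 2 * Real.exp (-a * x) * F x) =
      (a * (∫ t in Set.Ioi (0 : ℝ), t ^ 2 * Real.exp (-a * t) * f t)
          + 2 * (∫ t in Set.Ioi (0 : ℝ), t * Real.exp (-a * t) * f t)) / a ^ 2
        + (2 * (∫ t in Set.Ioi (0 : ℝ), Real.exp (-a * t) * f t)) / a ^ 3 := by
  have hf : IntegrableOn f (Ioi 0) := Integrable.of_integral_ne_zero (by simp [hf_prob])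
  have h2 := hf.pow_mul_exp_neg_mul_mul ha 2
  have h1 := hf.pow_mul_exp_neg_mul_mul ha 1
  have h0 := hf.pow_mul_exp_neg_mul_mul ha 0
  simp only [pow_one, pow_zero, one_mul] at h1 h0
  calc ∫ x in Ioi 0, x ^ 2 * exp (-a * x) * F x
      = ∫ x in Ioi 0, x ^ 2 * exp (-a * x) * ∫ t in 0..x, f t := by simp_rw [hF]
    _ = ∫ t in Ioi 0, (∫ x in Ioi t, x ^ 2 * exp (-a * x)) * f t :=
        integral_Ioi_mul_intervalIntegral_swap (integrableOn_Ioi_sq_mul_exp_neg_mul ha 0) hf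
    _ = ∫ t in Ioi 0, (1 / a * (t ^ 2 * exp (-a * t) * f t) + 2 / a ^ 2 * (t * exp (-a * t) * f t))
          + 2 / a ^ 3 * (exp (-a * t) * f t) := by
        congr 1 with t
        rw [integral_Ioi_sq_mul_exp_neg_mul ha]
        ring
    _ = _ := by
        rw [integral_add _ (h0.const_mul _), integral_add (h2.const_mul _) (h1.const_mul _),
          integral_const_mul, integral_const_mul, integral_const_mul]
        · field_simp
        · exact (h2.const_mul _).add (h1.const_mul _)

/-- Lemma 3: the Laplace transform of `x ↦ x²·F(x)` at `a`, where `F` is the CDF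
of a density `f` on `[0,∞)`, written with explicit integrals. -/
theorem laplace_transform_x_sq_cdf
    (f : ℝ → ℝ) (a : ℝ) (ha : 0 < a)
    (hfm : Measurable f) (hf_nonneg : ∀ t, 0 ≤ f t)
    (hf_prob : (∫ t in Set.Ioi (0 : ℝ), f t) = 1)
    (hf2 : IntegrableOn (fun t => t ^ 2 * f t) (Set.Ioi (0 : ℝ)))
    (F : ℝ → ℝ) (hF : ∀ x, F x = ∫ t in (0 : ℝ)..x, f t) :
    (∫ x in Set.Ioi (0 : ℝ), x ^ 2 * Real.exp (-a * x) * F x) =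
      (a * (∫ t in Set.Ioi (0 : ℝ), t ^ 2 * Real.exp (-a * t) * f t)
          + 2 * (∫ t in Set.Ioi (0 : ℝ), t * Real.exp (-a * t) * f t)) / a ^ 2
        + (2 * (∫ t in Set.Ioi (0 : ℝ), Real.exp (-a * t) * f t)) / a ^ 3 :=
  laplace_transform_x_sq_cdf_general f a ha hf_prob F hF
end

section
/- Let X and T be independent nonnegative real-valued random variables on a probability space, where X is exponentially distributed with rate λ1 > 0. Then E[X·T·1_{X > T}] = E[T²·exp(−λ1·T)] + E[T·exp(−λ1·T)]/λ1. -/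
open MeasureTheory ProbabilityTheory Real Set Filter Topology
open scoped Nat

/-!
By independence, the joint law of `(T, X)` is the product of the law `ν` of `T` with `Exp(λ)`,
so by Fubini `E[X T 1_{X > T}] = ∫ t · (∫_{x > t} x dExp(λ)) dν(t)`. Since `-(x + 1/λ) e^{-λx}` is
an antiderivative of `x · λ e^{-λx}`, the inner integral is `(t + 1/λ) e^{-λt}`. The resulting
integrand `t (t + 1/λ) e^{-λt}` is bounded on `[0, ∞)`, which is what makes Fubini applicable
although `T` itself need not be integrable.
-/

namespace Real

lemma pow_mul_exp_neg_mul_le {r t : ℝ} (hr : 0 < r) (ht : 0 ≤ t) (n : ℕ) :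
    t ^ n * exp (-(r * t)) ≤ n ! / r ^ n := by
  have h := pow_div_factorial_le_exp _ (mul_nonneg hr.le ht) n
  rw [div_le_iff₀ (by positivity)] at h
  rw [le_div_iff₀ (by positivity), exp_neg]
  calc t ^ n * (exp (r * t))⁻¹ * r ^ n = (r * t) ^ n * (exp (r * t))⁻¹ := by ring
    _ ≤ exp (r * t) * n ! * (exp (r * t))⁻¹ := by gcongr
    _ = n ! := by field_simp

lemma hasDerivAt_neg_add_inv_mul_exp_neg_mul {r : ℝ} (hr : r ≠ 0) (x : ℝ) :
    HasDerivAt (fun y => -((y + r⁻¹) * exp (-(r * y)))) (x * (r * exp (-(r * x)))) x := by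
  have h₁ : HasDerivAt (fun y => y + r⁻¹) 1 x := (hasDerivAt_id' x).add_const _
  have h₂ : HasDerivAt (fun y => exp (-(r * y))) (exp (-(r * x)) * -r) x := by
    simpa using ((hasDerivAt_id' x).const_mul r).neg.exp
  refine (h₁.mul h₂).neg.congr_deriv ?_
  field_simp
  ring

lemma tendsto_add_inv_mul_exp_neg_mul_atTop {r : ℝ} (hr : 0 < r) :
    Tendsto (fun y => (y + r⁻¹) * exp (-(r * y))) atTop (𝓝 0) := by
  have h₁ := tendsto_rpow_mul_exp_neg_mul_atTop_nhds_zero 1 r hr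
  have h₂ := (tendsto_exp_neg_atTop_nhds_zero.comp (tendsto_id.const_mul_atTop hr)).const_mul r⁻¹
  simpa [add_mul] using h₁.add h₂

section IoiIntegral

variable {r t : ℝ} (hr : 0 < r) (ht : 0 ≤ t)
include hr ht

lemma integrableOn_Ioi_mul_exp_neg_mul :
    IntegrableOn (fun x => x * (r * exp (-(r * x)))) (Ioi t) :=
  integrableOn_Ioi_deriv_of_nonneg' (fun x _ => hasDerivAt_neg_add_inv_mul_exp_neg_mul hr.ne' x)
    (fun x hx => by have := ht.trans_lt hx; positivity)
    (by simpa using (tendsto_add_inv_mul_exp_neg_mul_atTop hr).neg)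

lemma integral_Ioi_mul_exp_neg_mul :
    ∫ x in Ioi t, x * (r * exp (-(r * x))) = (t + r⁻¹) * exp (-(r * t)) := by
  rw [integral_Ioi_of_hasDerivAt_of_nonneg'
    (fun x _ => hasDerivAt_neg_add_inv_mul_exp_neg_mul hr.ne' x)
    (fun x hx => by have := ht.trans_lt hx; positivity)
    (by simpa using (tendsto_add_inv_mul_exp_neg_mul_atTop hr).neg)]
  ring

end IoiIntegral

end Real

lemma integrable_pow_mul_exp_neg_mul {ν : Measure ℝ} [IsFiniteMeasure ν] (hν : ∀ᵐ t ∂ν, 0 ≤ t)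
    {r : ℝ} (hr : 0 < r) (n : ℕ) :
    Integrable (fun t => t ^ n * exp (-(r * t))) ν :=
  .of_bound (by fun_prop) (n ! / r ^ n) <| hν.mono fun t ht => by
    rw [Real.norm_of_nonneg (by positivity)]
    exact pow_mul_exp_neg_mul_le hr ht n

lemma indicator_lt_mul_apply (t x : ℝ) :
    {q : ℝ × ℝ | q.1 < q.2}.indicator (fun q => q.2 * q.1) (t, x) =
      (Ioi t).indicator (fun x => x * t) x := by
  simp [indicator_apply]

namespace ProbabilityTheory

lemma IndepFun.integral_comp_eq_integral_integral {Ω α β E : Type*} [MeasurableSpace Ω]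
    [MeasurableSpace α] [MeasurableSpace β] [NormedAddCommGroup E] [NormedSpace ℝ E]
    {P : Measure Ω} [IsProbabilityMeasure P] {T : Ω → α} {X : Ω → β}
    (hT : Measurable T) (hX : Measurable X) (hTX : IndepFun T X P) {F : α × β → E}
    (hF : Integrable F ((P.map T).prod (P.map X))) :
    ∫ ω, F (T ω, X ω) ∂P = ∫ t, ∫ x, F (t, x) ∂P.map X ∂P.map T := by
  have := Measure.isProbabilityMeasure_map (μ := P) hT.aemeasurable
  have := Measure.isProbabilityMeasure_map (μ := P) hX.aemeasurable
  have hmap : P.map (fun ω => (T ω, X ω)) = (P.map T).prod (P.map X) :=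
    (indepFun_iff_map_prod_eq_prod_map_map hT.aemeasurable hX.aemeasurable).1 hTX
  rw [← integral_prod F hF, ← hmap, integral_map (hT.prodMk hX).aemeasurable
    (hmap ▸ hF.aestronglyMeasurable)]

lemma restrict_expMeasure_eq_withDensity {r : ℝ} {s : Set ℝ} (hs : MeasurableSet s)
    (hs₀ : s ⊆ Ici 0) :
    (expMeasure r).restrict s =
      (volume.restrict s).withDensity fun x => ENNReal.ofReal (r * exp (-(r * x))) := by
  rw [expMeasure, gammaMeasure, restrict_withDensity hs]
  refine withDensity_congr_ae ((ae_restrict_mem hs).mono fun x hx => ?_)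
  simp [gammaPDF_of_nonneg (hs₀ hx)]

section ExpMeasure

variable {r t : ℝ} (hr : 0 < r)
include hr

lemma integrableOn_Ioi_expMeasure (ht : 0 ≤ t) : IntegrableOn id (Ioi t) (expMeasure r) := by
  rw [IntegrableOn, restrict_expMeasure_eq_withDensity measurableSet_Ioi (Ioi_subset_Ici ht),
    integrable_withDensity_iff (by fun_prop) (ae_of_all _ fun _ => ENNReal.ofReal_lt_top)]
  refine (integrableOn_Ioi_mul_exp_neg_mul hr ht).congr_fun (fun x _ => ?_) measurableSet_Ioi
  rw [ENNReal.toReal_ofReal (by positivity), id]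

lemma setIntegral_Ioi_expMeasure (ht : 0 ≤ t) :
    ∫ x in Ioi t, x ∂expMeasure r = (t + r⁻¹) * exp (-(r * t)) := by
  rw [restrict_expMeasure_eq_withDensity measurableSet_Ioi (Ioi_subset_Ici ht),
    integral_withDensity_eq_integral_toReal_smul (by fun_prop)
      (ae_of_all _ fun _ => ENNReal.ofReal_lt_top), ← integral_Ioi_mul_exp_neg_mul hr ht]
  refine setIntegral_congr_fun measurableSet_Ioi fun x _ => ?_
  rw [ENNReal.toReal_ofReal (by positivity), smul_eq_mul, mul_comm]

lemma integral_indicator_Ioi_mul_expMeasure (ht : 0 ≤ t) :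
    ∫ x, (Ioi t).indicator (fun x => x * t) x ∂expMeasure r =
      t ^ 2 * exp (-(r * t)) + t * exp (-(r * t)) / r := by
  rw [integral_indicator measurableSet_Ioi, integral_mul_const, setIntegral_Ioi_expMeasure hr ht]
  field_simp

lemma integrable_indicator_lt_mul_prod_expMeasure {ν : Measure ℝ} [IsFiniteMeasure ν]
    (hν : ∀ᵐ t ∂ν, 0 ≤ t) :
    Integrable ({q : ℝ × ℝ | q.1 < q.2}.indicator fun q => q.2 * q.1) (ν.prod (expMeasure r)) := by
  have := isProbabilityMeasure_expMeasure hr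
  rw [integrable_prod_iff (by measurability)]
  simp only [indicator_lt_mul_apply]
  refine ⟨hν.mono fun t ht => ?_, ?_⟩
  · rw [integrable_indicator_iff measurableSet_Ioi]
    exact (integrableOn_Ioi_expMeasure hr ht).mul_const t
  · have h₁ := integrable_pow_mul_exp_neg_mul hν hr 1
    simp only [pow_one] at h₁
    refine ((integrable_pow_mul_exp_neg_mul hν hr 2).add (h₁.div_const r)).congr ?_
    filter_upwards [hν] with t ht
    rw [Pi.add_apply, ← integral_indicator_Ioi_mul_expMeasure hr ht]
    exact integral_congr_ae (ae_of_all _ fun x => (Real.norm_of_nonneg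
      (indicator_nonneg (fun x hx => mul_nonneg (ht.trans hx.le) ht) x)).symm)

end ExpMeasure

end ProbabilityTheory

theorem expectation_XT_indicator_long_event_general
    {Ω : Type*} [MeasureSpace Ω] [IsProbabilityMeasure (ℙ : Measure Ω)]
    (l1 : ℝ) (hl1 : 0 < l1) (X T : Ω → ℝ)
    (hXm : Measurable X) (hTm : Measurable T)
    (hTnonneg : ∀ ω, 0 ≤ T ω)
    (hindep : IndepFun X T ℙ)
    (hX : Measure.map X ℙ = expMeasure l1) :
    (∫ ω in {ω | T ω < X ω}, X ω * T ω ∂ℙ) =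
      (∫ ω, (T ω) ^ 2 * Real.exp (-l1 * T ω) ∂ℙ)
        + (∫ ω, T ω * Real.exp (-l1 * T ω) ∂ℙ) / l1 := by
  have := Measure.isProbabilityMeasure_map (μ := ℙ) hTm.aemeasurable
  have hT : ∀ᵐ t ∂Measure.map T ℙ, 0 ≤ t :=
    (ae_map_iff hTm.aemeasurable measurableSet_Ici).2 (ae_of_all _ hTnonneg)
  have hF := integrable_indicator_lt_mul_prod_expMeasure hl1 hT
  rw [← hX] at hF
  have h₂ := (integrable_pow_mul_exp_neg_mul hT hl1 2).comp_measurable hTm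
  have h₁ := (integrable_pow_mul_exp_neg_mul hT hl1 1).comp_measurable hTm
  simp only [Function.comp_def, pow_one] at h₁ h₂
  simp only [neg_mul]
  calc ∫ ω in {ω | T ω < X ω}, X ω * T ω
      = ∫ ω, {q : ℝ × ℝ | q.1 < q.2}.indicator (fun q => q.2 * q.1) (T ω, X ω) := by
        rw [← integral_indicator (measurableSet_lt hTm hXm)]
        rfl
    _ = ∫ t, ∫ x, (Ioi t).indicator (fun x => x * t) x ∂expMeasure l1 ∂Measure.map T ℙ := by
        rw [hindep.symm.integral_comp_eq_integral_integral hTm hXm hF, hX]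
        simp only [indicator_lt_mul_apply]
    _ = ∫ t, (t ^ 2 * exp (-(l1 * t)) + t * exp (-(l1 * t)) / l1) ∂Measure.map T ℙ :=
        integral_congr_ae (hT.mono fun t ht => integral_indicator_Ioi_mul_expMeasure hl1 ht)
    _ = ∫ ω, (T ω ^ 2 * exp (-(l1 * T ω)) + T ω * exp (-(l1 * T ω)) / l1) :=
        integral_map hTm.aemeasurable (by fun_prop)
    _ = _ := by rw [integral_add h₂ (h₁.div_const l1), integral_div]

/-- Equation (mnvbh00): `E[X·T·1_{X > T}] = E[T²·e^{−λ1 T}] + E[T·e^{−λ1 T}]/λ1`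
for independent nonnegative `X ~ Exp(λ1)` and `T`. -/
theorem expectation_XT_indicator_long_event
    {Ω : Type*} [MeasureSpace Ω] [IsProbabilityMeasure (ℙ : Measure Ω)]
    (l1 : ℝ) (hl1 : 0 < l1) (X T : Ω → ℝ)
    (hXm : Measurable X) (hTm : Measurable T)
    (hXnonneg : ∀ ω, 0 ≤ X ω) (hTnonneg : ∀ ω, 0 ≤ T ω)
    (hindep : IndepFun X T ℙ)
    (hX : Measure.map X ℙ = expMeasure l1) :
    (∫ ω in {ω | T ω < X ω}, X ω * T ω ∂ℙ) =
      (∫ ω, (T ω) ^ 2 * Real.exp (-l1 * T ω) ∂ℙ)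
        + (∫ ω, T ω * Real.exp (-l1 * T ω) ∂ℙ) / l1 :=
  expectation_XT_indicator_long_event_general l1 hl1 X T hXm hTm hTnonneg hindep hX
end
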